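/- Let T be a finite rooted tree with real edge weights ω, and for each vertex v let c_v be the maximum weight of a matching in T_v and c'_v the maximum weight of a matching in T_v not covering v. Suppose p is a partial function on vertices such that p(v) is defined exactly when v has a child and max_{u∈Ch_v} ( ω(u,v) + c'_u − c_u ) ≥ 0, in which case p(v) is some child u attaining this maximum. Then there exists a maximum-weight matching of T all of whose edges belong to E_p = { {v, p(v)} : p(v) defined }. -/
import Mathlib


open Finset

variable {V : Type*} [Fintype V] [DecidableEq V]

/-- A finite rooted tree, given by its root and its parent function: the root is its own
parent and every vertex reaches the root by iterating the parent map.  The edges of the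
tree are the pairs `{u, parent u}` for `u ≠ root`. -/
structure IsRootedTree (root : V) (parent : V → V) : Prop where
  parent_root : parent root = root
  reaches_root : ∀ v : V, ∃ n : ℕ, parent^[n] v = root

/-- The set `Ch_v` of children of `v`. -/
def children (root : V) (parent : V → V) (v : V) : Finset V :=
  univ.filter fun u => u ≠ root ∧ parent u = v

/-- `u` is a vertex of the maximal subtree `T_v` rooted at `v`
(i.e. `u` is `v` or a descendant of `v`). -/
def inSubtree (parent : V → V) (v u : V) : Prop := ∃ n : ℕ, parent^[n] u = v

/-- `M` is a matching of the subtree `T_v`: each edge of `T_v` is encoded by its lower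
endpoint (so the edge encoded by `u` is `{u, parent u}`, which lies in `T_v` exactly when
`u ∈ T_v` and `u ≠ v`), and the edges of `M` are pairwise vertex-disjoint. -/
def IsSubtreeMatching (parent : V → V) (v : V) (M : Finset V) : Prop :=
  (∀ u ∈ M, inSubtree parent v u ∧ u ≠ v) ∧
  (∀ u ∈ M, ∀ u' ∈ M, u ≠ u' → parent u ≠ u' ∧ parent u ≠ parent u')

/-- `c_v`: the maximum weight of a matching in `T_v`, where `ω u` is the weight of the
edge `{u, parent u}`. -/
noncomputable def maxMatch (parent : V → V) (ω : V → ℝ) (v : V) : ℝ :=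
  sSup {x : ℝ | ∃ M : Finset V, IsSubtreeMatching parent v M ∧ x = ∑ u ∈ M, ω u}

/-- `c'_v`: the maximum weight of a matching in `T_v` that does not cover `v`. -/
noncomputable def maxMatchAvoid (parent : V → V) (ω : V → ℝ) (v : V) : ℝ :=
  sSup {x : ℝ | ∃ M : Finset V, IsSubtreeMatching parent v M ∧
    (∀ u ∈ M, parent u ≠ v) ∧ x = ∑ u ∈ M, ω u}

set_option linter.unusedSectionVars false

section Depth

variable {root : V} {parent : V → V}

noncomputable def tdepth (hT : IsRootedTree root parent) (v : V) : ℕ :=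
  Nat.find (hT.reaches_root v)

lemma iterate_tdepth (hT : IsRootedTree root parent) (v : V) :
    parent^[tdepth hT v] v = root := Nat.find_spec (hT.reaches_root v)

lemma tdepth_le (hT : IsRootedTree root parent) {v : V} {n : ℕ} (h : parent^[n] v = root) :
    tdepth hT v ≤ n := Nat.find_le h

lemma iterate_root (hT : IsRootedTree root parent) (n : ℕ) : parent^[n] root = root := by
  induction n with
  | zero => rfl
  | succ n ih => rw [Function.iterate_succ_apply', ih, hT.parent_root]

lemma tdepth_root (hT : IsRootedTree root parent) : tdepth hT root = 0 :=
  Nat.le_zero.mp (tdepth_le hT (by rfl))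

lemma iterate_of_tdepth_le (hT : IsRootedTree root parent) {v : V} {n : ℕ}
    (h : tdepth hT v ≤ n) : parent^[n] v = root := by
  have h2 := iterate_tdepth hT v
  calc parent^[n] v = parent^[n - tdepth hT v] (parent^[tdepth hT v] v) := by
        rw [← Function.iterate_add_apply]; congr 1; omega
    _ = root := by rw [h2, iterate_root hT]

lemma tdepth_iterate (hT : IsRootedTree root parent) (n : ℕ) (v : V) :
    tdepth hT (parent^[n] v) = tdepth hT v - n := by
  rcases le_or_gt n (tdepth hT v) with h | h
  · apply le_antisymm
    · apply tdepth_le hT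
      rw [← Function.iterate_add_apply]
      have h3 : tdepth hT v - n + n = tdepth hT v := by omega
      rw [h3, iterate_tdepth hT]
    · have h2 : parent^[tdepth hT (parent^[n] v) + n] v = root := by
        rw [Function.iterate_add_apply, iterate_tdepth hT]
      have := tdepth_le hT h2
      omega
  · have h2 : parent^[n] v = root := iterate_of_tdepth_le hT (le_of_lt h)
    rw [h2, tdepth_root hT]; omega

lemma tdepth_lt_card (hT : IsRootedTree root parent) (v : V) :
    tdepth hT v < Fintype.card V := by
  by_contra hc
  push_neg at hc
  set d := tdepth hT v with hd
  have key : ∀ i j : ℕ, i < j → j ≤ d → parent^[i] v ≠ parent^[j] v := by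
    intro i j hij hjd heq
    have h1 : parent^[d - j + i] v = root := by
      rw [Function.iterate_add_apply, heq]
      have h2 : parent^[d - j] (parent^[j] v) = parent^[d] v := by
        rw [← Function.iterate_add_apply]; congr 1; omega
      rw [h2, iterate_tdepth hT]
    have := tdepth_le hT h1
    omega
  have hinj : Set.InjOn (fun i => parent^[i] v) (Finset.range (d + 1)) := by
    intro i hi j hj hij
    simp only [Finset.coe_range, Set.mem_Iio] at hi hj
    simp only at hij
    by_contra hne
    rcases Nat.lt_or_ge i j with h | h
    · exact key i j h (by omega) hij
    · exact key j i (by omega) (by omega) hij.symm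
  have := Finset.card_le_card_of_injOn (fun i => parent^[i] v)
    (fun x _ => Finset.mem_univ _) hinj
  simp at this
  omega

lemma mem_children_iff {u v : V} :
    u ∈ children root parent v ↔ u ≠ root ∧ parent u = v := by
  simp [children]

lemma tdepth_child (hT : IsRootedTree root parent) {u v : V} (h : u ∈ children root parent v) :
    tdepth hT u = tdepth hT v + 1 := by
  rw [mem_children_iff] at h
  have h0 : tdepth hT u ≠ 0 := by
    intro h0
    have : parent^[0] u = root := h0 ▸ iterate_tdepth hT u
    exact h.1 this
  have := tdepth_iterate hT 1 u
  rw [Function.iterate_one, h.2] at this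
  omega

lemma inSubtree_iff (hT : IsRootedTree root parent) {v u : V} :
    inSubtree parent v u ↔ parent^[tdepth hT u - tdepth hT v] u = v := by
  constructor
  · rintro ⟨n, hn⟩
    rcases le_or_gt n (tdepth hT u) with h | h
    · have hd : tdepth hT v = tdepth hT u - n := by rw [← hn, tdepth_iterate hT]
      have h3 : tdepth hT u - tdepth hT v = n := by omega
      rw [h3, hn]
    · have hroot : parent^[n] u = root := iterate_of_tdepth_le hT (le_of_lt h)
      have hv : v = root := by rw [← hn, hroot]
      subst hv
      rw [tdepth_root hT]
      exact iterate_of_tdepth_le hT (by omega)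
  · intro h; exact ⟨_, h⟩

lemma tdepth_le_of_inSubtree (hT : IsRootedTree root parent) {v u : V}
    (h : inSubtree parent v u) : tdepth hT v ≤ tdepth hT u := by
  rw [inSubtree_iff hT] at h
  have := tdepth_iterate hT (tdepth hT u - tdepth hT v) u
  rw [h] at this
  omega

lemma inSubtree_refl (v : V) : inSubtree parent v v := ⟨0, rfl⟩

lemma eq_of_inSubtree_of_tdepth_le (hT : IsRootedTree root parent) {v u : V}
    (h : inSubtree parent v u) (hd : tdepth hT u ≤ tdepth hT v) : u = v := by
  rw [inSubtree_iff hT] at h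
  have h2 : tdepth hT u - tdepth hT v = 0 := by omega
  rw [h2] at h
  exact h

lemma inSubtree_unique (hT : IsRootedTree root parent) {v w u : V}
    (h1 : inSubtree parent v u) (h2 : inSubtree parent w u)
    (hd : tdepth hT v = tdepth hT w) : v = w := by
  rw [inSubtree_iff hT] at h1 h2
  rw [← h1, ← h2, hd]

lemma inSubtree_trans {a b c : V} (h1 : inSubtree parent a b) (h2 : inSubtree parent b c) :
    inSubtree parent a c := by
  obtain ⟨n, hn⟩ := h1; obtain ⟨m, hm⟩ := h2
  exact ⟨n + m, by rw [Function.iterate_add_apply, hm, hn]⟩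

/-- every strict subtree vertex lies in the subtree of a child -/
lemma exists_branch (hT : IsRootedTree root parent) {v u : V} (h : inSubtree parent v u)
    (hne : u ≠ v) : ∃ c ∈ children root parent v, inSubtree parent c u := by
  have hiff := (inSubtree_iff hT).mp h
  have hlt : tdepth hT v < tdepth hT u := by
    rcases lt_or_ge (tdepth hT v) (tdepth hT u) with h' | h'
    · exact h'
    · exact absurd (eq_of_inSubtree_of_tdepth_le hT h h') hne
  set k := tdepth hT u - tdepth hT v with hk
  refine ⟨parent^[k - 1] u, ?_, ⟨k - 1, rfl⟩⟩
  rw [mem_children_iff]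
  constructor
  · intro hr
    have h2 : tdepth hT (parent^[k-1] u) = 0 := by rw [hr, tdepth_root hT]
    rw [tdepth_iterate hT] at h2
    omega
  · have h2 : parent (parent^[k-1] u) = parent^[k] u := by
      conv_rhs => rw [show k = (k-1)+1 by omega]
      rw [Function.iterate_succ_apply']
    rw [h2, hiff]

lemma branch_disjoint (hT : IsRootedTree root parent) {v c c' u : V}
    (hc : c ∈ children root parent v) (hc' : c' ∈ children root parent v)
    (h1 : inSubtree parent c u) (h2 : inSubtree parent c' u) : c = c' :=
  inSubtree_unique hT h1 h2 (by rw [tdepth_child hT hc, tdepth_child hT hc'])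

lemma child_inSubtree {c v : V} (hc : c ∈ children root parent v) : inSubtree parent v c := by
  rw [mem_children_iff] at hc
  exact ⟨1, by simp [hc.2]⟩

lemma ne_of_inSubtree_child (hT : IsRootedTree root parent) {c v u : V}
    (hc : c ∈ children root parent v) (h : inSubtree parent c u) : u ≠ v := by
  intro h'
  subst h'
  have h2 := tdepth_le_of_inSubtree hT h
  rw [tdepth_child hT hc] at h2
  omega

lemma parent_mem_subtree {c u : V} (h : inSubtree parent c u) (hne : u ≠ c) :
    inSubtree parent c (parent u) := by
  obtain ⟨n, hn⟩ := h
  match n, hn with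
  | 0, hn => exact absurd hn hne
  | n+1, hn => exact ⟨n, by rw [← hn, ← Function.iterate_succ_apply]⟩

end Depth

section Matchings

variable {root : V} {parent : V → V} {ω : V → ℝ}

lemma maxMatch_eq {v : V} {A : Finset V} (hA : IsSubtreeMatching parent v A)
    (hb : ∀ M, IsSubtreeMatching parent v M → ∑ u ∈ M, ω u ≤ ∑ u ∈ A, ω u) :
    maxMatch parent ω v = ∑ u ∈ A, ω u := by
  have hmem : (∑ u ∈ A, ω u) ∈
      {x : ℝ | ∃ M : Finset V, IsSubtreeMatching parent v M ∧ x = ∑ u ∈ M, ω u} :=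
    ⟨A, hA, rfl⟩
  have hub : (∑ u ∈ A, ω u) ∈ upperBounds
      {x : ℝ | ∃ M : Finset V, IsSubtreeMatching parent v M ∧ x = ∑ u ∈ M, ω u} := by
    rintro x ⟨M, hM, rfl⟩
    exact hb M hM
  exact le_antisymm (csSup_le ⟨_, hmem⟩ hub) (le_csSup ⟨_, hub⟩ hmem)

lemma maxMatchAvoid_eq {v : V} {A : Finset V} (hA : IsSubtreeMatching parent v A)
    (hAv : ∀ u ∈ A, parent u ≠ v)
    (hb : ∀ M, IsSubtreeMatching parent v M → (∀ u ∈ M, parent u ≠ v) →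
      ∑ u ∈ M, ω u ≤ ∑ u ∈ A, ω u) :
    maxMatchAvoid parent ω v = ∑ u ∈ A, ω u := by
  have hmem : (∑ u ∈ A, ω u) ∈
      {x : ℝ | ∃ M : Finset V, IsSubtreeMatching parent v M ∧
        (∀ u ∈ M, parent u ≠ v) ∧ x = ∑ u ∈ M, ω u} :=
    ⟨A, hA, hAv, rfl⟩
  have hub : (∑ u ∈ A, ω u) ∈ upperBounds
      {x : ℝ | ∃ M : Finset V, IsSubtreeMatching parent v M ∧
        (∀ u ∈ M, parent u ≠ v) ∧ x = ∑ u ∈ M, ω u} := by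
    rintro x ⟨M, hM, hMv, rfl⟩
    exact hb M hM hMv
  exact le_antisymm (csSup_le ⟨_, hmem⟩ hub) (le_csSup ⟨_, hub⟩ hmem)

lemma matching_subset {v : V} {M M' : Finset V} (h : M' ⊆ M)
    (hM : IsSubtreeMatching parent v M) : IsSubtreeMatching parent v M' :=
  ⟨fun u hu => hM.1 u (h hu), fun u hu u' hu' => hM.2 u (h hu) u' (h hu')⟩

noncomputable def subFilter (parent : V → V) (c : V) (M : Finset V) : Finset V :=
  @Finset.filter _ (fun x => inSubtree parent c x) (Classical.decPred _) M

lemma mem_subFilter {c x : V} {M : Finset V} :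
    x ∈ subFilter parent c M ↔ x ∈ M ∧ inSubtree parent c x := by
  simp [subFilter]

/-- decomposition of a set of strict subtree vertices by child subtrees -/
lemma biUnion_subFilter_eq (hT : IsRootedTree root parent) {v : V} {M : Finset V}
    (hM : ∀ x ∈ M, inSubtree parent v x ∧ x ≠ v) :
    M = (children root parent v).biUnion (fun c => subFilter parent c M) := by
  ext x
  simp only [Finset.mem_biUnion, mem_subFilter]
  constructor
  · intro hx
    obtain ⟨c, hc, hcx⟩ := exists_branch hT (hM x hx).1 (hM x hx).2
    exact ⟨c, hc, hx, hcx⟩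
  · rintro ⟨c, _, hx, _⟩
    exact hx

lemma subFilter_pairwiseDisjoint (hT : IsRootedTree root parent) (v : V) (M : Finset V) :
    (↑(children root parent v) : Set V).PairwiseDisjoint (fun c => subFilter parent c M) := by
  intro c hc c' hc' hne
  simp only [Function.onFun]
  rw [Finset.disjoint_left]
  intro x hx hx'
  rw [mem_subFilter] at hx hx'
  exact hne (branch_disjoint hT hc hc' hx.2 hx'.2)

lemma sum_decomp (hT : IsRootedTree root parent) {v : V} {M : Finset V}
    (hM : ∀ x ∈ M, inSubtree parent v x ∧ x ≠ v) :
    ∑ u ∈ M, ω u = ∑ c ∈ children root parent v, ∑ u ∈ subFilter parent c M, ω u := by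
  conv_lhs => rw [biUnion_subFilter_eq hT hM]
  exact Finset.sum_biUnion (subFilter_pairwiseDisjoint hT v M)

end Matchings

section Key

variable {root : V} {parent : V → V} {ω : V → ℝ} {p : V → Option V}

def Good (parent : V → V) (ω : V → ℝ) (p : V → Option V) (v : V) : Prop :=
  (∃ A, IsSubtreeMatching parent v A ∧ (∀ u ∈ A, p (parent u) = some u) ∧
    ∀ M, IsSubtreeMatching parent v M → ∑ u ∈ M, ω u ≤ ∑ u ∈ A, ω u) ∧
  (∃ B, IsSubtreeMatching parent v B ∧ (∀ u ∈ B, parent u ≠ v) ∧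
    (∀ u ∈ B, p (parent u) = some u) ∧
    ∀ M, IsSubtreeMatching parent v M → (∀ u ∈ M, parent u ≠ v) →
      ∑ u ∈ M, ω u ≤ ∑ u ∈ B, ω u)

lemma key (hT : IsRootedTree root parent)
    (hdef : ∀ v : V, (p v).isSome ↔
      ∃ hne : (children root parent v).Nonempty,
        0 ≤ (children root parent v).sup' hne
          (fun u => ω u + maxMatchAvoid parent ω u - maxMatch parent ω u))
    (hsel : ∀ v u : V, p v = some u → u ∈ children root parent v ∧
      ∀ x ∈ children root parent v,
        ω x + maxMatchAvoid parent ω x - maxMatch parent ω x ≤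
          ω u + maxMatchAvoid parent ω u - maxMatch parent ω u) :
    ∀ v : V, Good parent ω p v := by
  intro v₀
  suffices H : ∀ n : ℕ, ∀ v : V, Fintype.card V - tdepth hT v ≤ n → Good parent ω p v from
    H _ v₀ le_rfl
  intro n
  induction n with
  | zero =>
    intro v hv
    have := tdepth_lt_card hT v
    omega
  | succ n IH =>
    intro v hv
    set Ch := children root parent v with hChdef
    have hchGood : ∀ c ∈ Ch, Good parent ω p c := by
      intro c hc
      apply IH
      have h1 := tdepth_child hT hc
      omega
    have h1 : ∀ c ∈ Ch, ∃ A, IsSubtreeMatching parent c A ∧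
        (∀ u ∈ A, p (parent u) = some u) ∧
        ∀ M, IsSubtreeMatching parent c M → ∑ u ∈ M, ω u ≤ ∑ u ∈ A, ω u :=
      fun c hc => (hchGood c hc).1
    choose! A hA1 hA2 hA3 using h1
    have h2 : ∀ c ∈ Ch, ∃ B, IsSubtreeMatching parent c B ∧ (∀ u ∈ B, parent u ≠ c) ∧
        (∀ u ∈ B, p (parent u) = some u) ∧
        ∀ M, IsSubtreeMatching parent c M → (∀ u ∈ M, parent u ≠ c) →
          ∑ u ∈ M, ω u ≤ ∑ u ∈ B, ω u :=
      fun c hc => (hchGood c hc).2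
    choose! B hB1 hB2 hB3 hB4 using h2
    have hAval : ∀ c ∈ Ch, maxMatch parent ω c = ∑ u ∈ A c, ω u :=
      fun c hc => maxMatch_eq (hA1 c hc) (hA3 c hc)
    have hBval : ∀ c ∈ Ch, maxMatchAvoid parent ω c = ∑ u ∈ B c, ω u :=
      fun c hc => maxMatchAvoid_eq (hB1 c hc) (hB2 c hc) (hB4 c hc)
    have hfacts : ∀ c ∈ Ch, ∀ x : V, inSubtree parent c x → x ≠ c →
        inSubtree parent v x ∧ x ≠ v ∧ inSubtree parent c (parent x) ∧ parent x ≠ v := by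
      intro c hc x hx hxc
      have h1 : inSubtree parent v x := inSubtree_trans (child_inSubtree hc) hx
      have h2 : x ≠ v := ne_of_inSubtree_child hT hc hx
      have h3 : inSubtree parent c (parent x) := parent_mem_subtree hx hxc
      have h4 : parent x ≠ v := ne_of_inSubtree_child hT hc h3
      exact ⟨h1, h2, h3, h4⟩
    have hcross : ∀ c ∈ Ch, ∀ c' ∈ Ch, c ≠ c' → ∀ x y : V, inSubtree parent c x →
        inSubtree parent c' y → x ≠ y := by
      intro c hc c' hc' hne x y hx hy heq
      exact hne (branch_disjoint hT hc hc' hx (heq ▸ hy))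
    have hdisjA : (↑Ch : Set V).PairwiseDisjoint A := by
      intro c hc c' hc' hne
      simp only [Function.onFun]
      rw [Finset.disjoint_left]
      intro x hx hx'
      exact hcross c hc c' hc' hne x x ((hA1 c hc).1 x hx).1 ((hA1 c' hc').1 x hx').1 rfl
    set Bv := Ch.biUnion A with hBvdef
    have hBvsum : ∑ u ∈ Bv, ω u = ∑ c ∈ Ch, ∑ u ∈ A c, ω u := Finset.sum_biUnion hdisjA
    have hBvmatch : IsSubtreeMatching parent v Bv := by
      constructor
      · intro x hx
        obtain ⟨c, hc, hxc⟩ := Finset.mem_biUnion.mp hx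
        obtain ⟨hxs, hxnec⟩ := (hA1 c hc).1 x hxc
        exact ⟨(hfacts c hc x hxs hxnec).1, (hfacts c hc x hxs hxnec).2.1⟩
      · intro x hx y hy hxy
        obtain ⟨c, hc, hxc⟩ := Finset.mem_biUnion.mp hx
        obtain ⟨c', hc', hyc⟩ := Finset.mem_biUnion.mp hy
        by_cases hcc : c = c'
        · subst hcc; exact (hA1 c hc).2 x hxc y hyc hxy
        · obtain ⟨hxs, hxnec⟩ := (hA1 c hc).1 x hxc
          obtain ⟨hys, hynec⟩ := (hA1 c' hc').1 y hyc
          have hpx := (hfacts c hc x hxs hxnec).2.2.1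
          have hpy := (hfacts c' hc' y hys hynec).2.2.1
          exact ⟨hcross c hc c' hc' hcc _ _ hpx hys, hcross c hc c' hc' hcc _ _ hpx hpy⟩
    have hBvavoid : ∀ x ∈ Bv, parent x ≠ v := by
      intro x hx
      obtain ⟨c, hc, hxc⟩ := Finset.mem_biUnion.mp hx
      obtain ⟨hxs, hxnec⟩ := (hA1 c hc).1 x hxc
      exact (hfacts c hc x hxs hxnec).2.2.2
    have hBvp : ∀ x ∈ Bv, p (parent x) = some x := by
      intro x hx
      obtain ⟨c, hc, hxc⟩ := Finset.mem_biUnion.mp hx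
      exact hA2 c hc x hxc
    have havoidb : ∀ M, IsSubtreeMatching parent v M → (∀ x ∈ M, parent x ≠ v) →
        ∑ u ∈ M, ω u ≤ ∑ c ∈ Ch, ∑ u ∈ A c, ω u := by
      intro M hM hMv
      rw [sum_decomp hT hM.1]
      apply Finset.sum_le_sum
      intro c hc
      apply hA3 c hc
      constructor
      · intro x hx
        rw [mem_subFilter] at hx
        refine ⟨hx.2, fun hxc => ?_⟩
        apply hMv x hx.1
        rw [hxc]
        exact (mem_children_iff.mp hc).2
      · intro x hx y hy
        rw [mem_subFilter] at hx hy
        exact hM.2 x hx.1 y hy.1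
    have hcoverb : ∀ M, IsSubtreeMatching parent v M → ∀ w, w ∈ M → parent w = v →
        w ∈ Ch ∧ ∑ u ∈ M, ω u ≤
          ω w + ∑ u ∈ B w, ω u + ∑ c ∈ Ch.erase w, ∑ u ∈ A c, ω u := by
      intro M hM w hwM hwv
      have hwCh : w ∈ Ch := by
        rw [hChdef, mem_children_iff]
        refine ⟨fun hr => ?_, hwv⟩
        apply (hM.1 w hwM).2
        rw [hr, ← hwv, hr, hT.parent_root]
      refine ⟨hwCh, ?_⟩
      have herase : IsSubtreeMatching parent v (M.erase w) :=
        matching_subset (Finset.erase_subset _ _) hM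
      have hsum : ∑ u ∈ M, ω u = ω w + ∑ u ∈ M.erase w, ω u :=
        (Finset.add_sum_erase M ω hwM).symm
      have hSw : ∑ u ∈ subFilter parent w (M.erase w), ω u ≤ ∑ u ∈ B w, ω u := by
        apply hB4 w hwCh
        · constructor
          · intro x hx
            rw [mem_subFilter, Finset.mem_erase] at hx
            exact ⟨hx.2, hx.1.1⟩
          · intro x hx y hy
            rw [mem_subFilter, Finset.mem_erase] at hx hy
            exact hM.2 x hx.1.2 y hy.1.2
        · intro x hx
          rw [mem_subFilter, Finset.mem_erase] at hx
          exact (hM.2 x hx.1.2 w hwM hx.1.1).1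
      have hSc : ∀ c ∈ Ch.erase w,
          ∑ u ∈ subFilter parent c (M.erase w), ω u ≤ ∑ u ∈ A c, ω u := by
        intro c hc
        obtain ⟨hcw, hcCh⟩ := Finset.mem_erase.mp hc
        apply hA3 c hcCh
        constructor
        · intro x hx
          rw [mem_subFilter, Finset.mem_erase] at hx
          refine ⟨hx.2, fun hxc => ?_⟩
          apply (hM.2 x hx.1.2 w hwM hx.1.1).2
          rw [hxc, (mem_children_iff.mp hcCh).2, hwv]
        · intro x hx y hy
          rw [mem_subFilter, Finset.mem_erase] at hx hy
          exact hM.2 x hx.1.2 y hy.1.2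
      have hdec := sum_decomp (ω := ω) hT herase.1
      have hsplit : ∑ c ∈ Ch, ∑ u ∈ subFilter parent c (M.erase w), ω u =
          ∑ u ∈ subFilter parent w (M.erase w), ω u +
          ∑ c ∈ Ch.erase w, ∑ u ∈ subFilter parent c (M.erase w), ω u :=
        (Finset.add_sum_erase Ch _ hwCh).symm
      have hScsum := Finset.sum_le_sum hSc
      rw [hsum, hdec, hsplit]
      linarith
    refine ⟨?_, Bv, hBvmatch, hBvavoid, hBvp,
      fun M hM hMv => le_of_le_of_eq (havoidb M hM hMv) hBvsum.symm⟩
    cases hpv : p v with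
    | none =>
      refine ⟨Bv, hBvmatch, hBvp, ?_⟩
      intro M hM
      by_cases hw : ∃ w ∈ M, parent w = v
      · obtain ⟨w, hwM, hwv⟩ := hw
        obtain ⟨hwCh, hbound⟩ := hcoverb M hM w hwM hwv
        have hnotsome : ¬ (p v).isSome := by simp [hpv]
        rw [hdef v] at hnotsome
        push_neg at hnotsome
        have hne : Ch.Nonempty := ⟨w, hwCh⟩
        have hsup := hnotsome hne
        have hle := Finset.le_sup'
          (fun u => ω u + maxMatchAvoid parent ω u - maxMatch parent ω u) hwCh
        have hval : ω w + ∑ u ∈ B w, ω u - ∑ u ∈ A w, ω u < 0 := by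
          rw [← hAval w hwCh, ← hBval w hwCh]
          linarith
        have hid1 : ∑ u ∈ A w, ω u + ∑ c ∈ Ch.erase w, ∑ u ∈ A c, ω u =
            ∑ c ∈ Ch, ∑ u ∈ A c, ω u := by
          exact Finset.add_sum_erase Ch (fun c => ∑ u ∈ A c, ω u) hwCh
        rw [hBvsum]
        linarith
      · push_neg at hw
        exact le_of_le_of_eq (havoidb M hM hw) hBvsum.symm
    | some u0 =>
      obtain ⟨hu0Ch, hmax⟩ := hsel v u0 hpv
      set D := (Ch.erase u0).biUnion A with hDdef
      set Av := insert u0 (B u0 ∪ D) with hAvdef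
      have hpu0 : parent u0 = v := (mem_children_iff.mp hu0Ch).2
      have hu0nB : u0 ∉ B u0 := fun h => ((hB1 u0 hu0Ch).1 u0 h).2 rfl
      have hDmemE : ∀ x ∈ D, ∃ c, c ∈ Ch ∧ c ≠ u0 ∧ x ∈ A c := by
        intro x hx
        obtain ⟨c, hc, hxc⟩ := Finset.mem_biUnion.mp hx
        obtain ⟨hcne, hcCh⟩ := Finset.mem_erase.mp hc
        exact ⟨c, hcCh, hcne, hxc⟩
      have hu0nD : u0 ∉ D := by
        intro h
        obtain ⟨c, hcCh, hcne, hxc⟩ := hDmemE u0 h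
        exact hcne (branch_disjoint hT hcCh hu0Ch ((hA1 c hcCh).1 u0 hxc).1
          (inSubtree_refl u0))
      have hBD : Disjoint (B u0) D := by
        rw [Finset.disjoint_left]
        intro x hxB hxD
        obtain ⟨c, hcCh, hcne, hxc⟩ := hDmemE x hxD
        exact hcross u0 hu0Ch c hcCh (Ne.symm hcne) x x ((hB1 u0 hu0Ch).1 x hxB).1
          ((hA1 c hcCh).1 x hxc).1 rfl
      have hDsum : ∑ u ∈ D, ω u = ∑ c ∈ Ch.erase u0, ∑ u ∈ A c, ω u := by
        apply Finset.sum_biUnion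
        exact hdisjA.subset (Finset.coe_subset.mpr (Finset.erase_subset _ _))
      have hAvsum : ∑ u ∈ Av, ω u =
          ω u0 + (∑ u ∈ B u0, ω u + ∑ c ∈ Ch.erase u0, ∑ u ∈ A c, ω u) := by
        rw [hAvdef, Finset.sum_insert (by simp [Finset.mem_union, hu0nB, hu0nD]),
          Finset.sum_union hBD, hDsum]
      have hBfacts : ∀ x ∈ B u0, inSubtree parent u0 x ∧ x ≠ u0 ∧ x ≠ v ∧
          inSubtree parent u0 (parent x) ∧ parent x ≠ v ∧ parent x ≠ u0 := by
        intro x hx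
        obtain ⟨h1, h2⟩ := (hB1 u0 hu0Ch).1 x hx
        obtain ⟨_, h5, h3, h4⟩ := hfacts u0 hu0Ch x h1 h2
        exact ⟨h1, h2, h5, h3, h4, hB2 u0 hu0Ch x hx⟩
      have hDfacts : ∀ x ∈ D, ∃ c, c ∈ Ch ∧ c ≠ u0 ∧ inSubtree parent c x ∧ x ≠ c ∧
          x ≠ v ∧ inSubtree parent c (parent x) ∧ parent x ≠ v := by
        intro x hx
        obtain ⟨c, hcCh, hcne, hxc⟩ := hDmemE x hx
        obtain ⟨h1, h2⟩ := (hA1 c hcCh).1 x hxc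
        obtain ⟨_, h5, h3, h4⟩ := hfacts c hcCh x h1 h2
        exact ⟨c, hcCh, hcne, h1, h2, h5, h3, h4⟩
      have hAvcase : ∀ x ∈ Av, x = u0 ∨ x ∈ B u0 ∨ x ∈ D := by
        intro x hx
        rw [hAvdef, Finset.mem_insert, Finset.mem_union] at hx
        tauto
      have hu0v : u0 ≠ v := ne_of_inSubtree_child hT hu0Ch (inSubtree_refl u0)
      have hAvmatch : IsSubtreeMatching parent v Av := by
        constructor
        · intro x hx
          rcases hAvcase x hx with h | h | h
          · subst h
            exact ⟨child_inSubtree hu0Ch, hu0v⟩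
          · obtain ⟨h1, h2, h3, _⟩ := hBfacts x h
            exact ⟨inSubtree_trans (child_inSubtree hu0Ch) h1, h3⟩
          · obtain ⟨c, hcCh, _, h1, h2, h3, _⟩ := hDfacts x h
            exact ⟨inSubtree_trans (child_inSubtree hcCh) h1, h3⟩
        · intro x hx y hy hxy
          rcases hAvcase x hx with hx' | hx' | hx' <;>
            rcases hAvcase y hy with hy' | hy' | hy'
          · exact absurd (hx'.trans hy'.symm) hxy
          · subst hx'
            obtain ⟨h1, h2, h3, h4, h5, h6⟩ := hBfacts y hy'
            rw [hpu0]
            exact ⟨Ne.symm h3, Ne.symm h5⟩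
          · subst hx'
            obtain ⟨c, hcCh, hcne, h1, h2, h3, h4, h5⟩ := hDfacts y hy'
            rw [hpu0]
            exact ⟨Ne.symm h3, Ne.symm h5⟩
          · obtain ⟨h1, h2, h3, h4, h5, h6⟩ := hBfacts x hx'
            rw [hy', hpu0]
            exact ⟨h6, h5⟩
          · exact (hB1 u0 hu0Ch).2 x hx' y hy' hxy
          · obtain ⟨h1, h2, h3, h4, h5, h6⟩ := hBfacts x hx'
            obtain ⟨c, hcCh, hcne, k1, k2, k3, k4, k5⟩ := hDfacts y hy'
            exact ⟨hcross u0 hu0Ch c hcCh (Ne.symm hcne) _ _ h4 k1,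
              hcross u0 hu0Ch c hcCh (Ne.symm hcne) _ _ h4 k4⟩
          · obtain ⟨c, hcCh, hcne, h1, h2, h3, h4, h5⟩ := hDfacts x hx'
            rw [hy', hpu0]
            exact ⟨hcross c hcCh u0 hu0Ch hcne _ _ h4 (inSubtree_refl u0), h5⟩
          · obtain ⟨c, hcCh, hcne, h1, h2, h3, h4, h5⟩ := hDfacts x hx'
            obtain ⟨k1, k2, k3, k4, k5, k6⟩ := hBfacts y hy'
            exact ⟨hcross c hcCh u0 hu0Ch hcne _ _ h4 k1,
              hcross c hcCh u0 hu0Ch hcne _ _ h4 k4⟩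
          · obtain ⟨c, hcCh, hcne, hxc⟩ := hDmemE x hx'
            obtain ⟨c', hcCh', hcne', hyc⟩ := hDmemE y hy'
            by_cases hcc : c = c'
            · subst hcc
              exact (hA1 c hcCh).2 x hxc y hyc hxy
            · obtain ⟨h1, h2⟩ := (hA1 c hcCh).1 x hxc
              obtain ⟨k1, k2⟩ := (hA1 c' hcCh').1 y hyc
              have hpx := (hfacts c hcCh x h1 h2).2.2.1
              have hpy := (hfacts c' hcCh' y k1 k2).2.2.1
              exact ⟨hcross c hcCh c' hcCh' hcc _ _ hpx k1,
                hcross c hcCh c' hcCh' hcc _ _ hpx hpy⟩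
      have hAvp : ∀ x ∈ Av, p (parent x) = some x := by
        intro x hx
        rcases hAvcase x hx with h | h | h
        · subst h
          rw [hpu0]
          exact hpv
        · exact hB3 u0 hu0Ch x h
        · obtain ⟨c, hcCh, hcne, hxc⟩ := hDmemE x h
          exact hA2 c hcCh x hxc
      have hps : (p v).isSome := by simp [hpv]
      obtain ⟨hne0, hsup0⟩ := (hdef v).mp hps
      have hsup_le : (children root parent v).sup' hne0
          (fun u => ω u + maxMatchAvoid parent ω u - maxMatch parent ω u) ≤
          ω u0 + maxMatchAvoid parent ω u0 - maxMatch parent ω u0 :=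
        Finset.sup'_le _ _ (fun x hx => hmax x hx)
      have hval0 : 0 ≤ ω u0 + ∑ u ∈ B u0, ω u - ∑ u ∈ A u0, ω u := by
        rw [← hAval u0 hu0Ch, ← hBval u0 hu0Ch]
        linarith
      have hid2 : ∑ u ∈ A u0, ω u + ∑ c ∈ Ch.erase u0, ∑ u ∈ A c, ω u =
          ∑ c ∈ Ch, ∑ u ∈ A c, ω u := by
        exact Finset.add_sum_erase Ch (fun c => ∑ u ∈ A c, ω u) hu0Ch
      refine ⟨Av, hAvmatch, hAvp, ?_⟩
      intro M hM
      by_cases hw : ∃ w ∈ M, parent w = v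
      · obtain ⟨w, hwM, hwv⟩ := hw
        obtain ⟨hwCh, hbound⟩ := hcoverb M hM w hwM hwv
        have hvalw : ω w + ∑ u ∈ B w, ω u - ∑ u ∈ A w, ω u ≤
            ω u0 + ∑ u ∈ B u0, ω u - ∑ u ∈ A u0, ω u := by
          rw [← hAval w hwCh, ← hBval w hwCh, ← hAval u0 hu0Ch, ← hBval u0 hu0Ch]
          exact hmax w hwCh
        have hid1 : ∑ u ∈ A w, ω u + ∑ c ∈ Ch.erase w, ∑ u ∈ A c, ω u =
            ∑ c ∈ Ch, ∑ u ∈ A c, ω u := by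
          exact Finset.add_sum_erase Ch (fun c => ∑ u ∈ A c, ω u) hwCh
        rw [hAvsum]
        linarith
      · push_neg at hw
        have hb := havoidb M hM hw
        rw [hAvsum]
        linarith

end Key


/-- suppose the child-match pointer `p v` is defined exactly when `v` has a
child and `max_{u∈Ch_v} (ω(u,v) + c'_u − c_u) ≥ 0`, in which case `p v` is a child
attaining this maximum.  Then some maximum-weight matching of `T` (i.e. of `T_root`)
uses only edges `{v, p v}` with `p v` defined. -/
theorem statement8 (root : V) (parent : V → V) (hT : IsRootedTree root parent)
    (ω : V → ℝ) (p : V → Option V)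
    (hdef : ∀ v : V, (p v).isSome ↔
      ∃ hne : (children root parent v).Nonempty,
        0 ≤ (children root parent v).sup' hne
          (fun u => ω u + maxMatchAvoid parent ω u - maxMatch parent ω u))
    (hsel : ∀ v u : V, p v = some u → u ∈ children root parent v ∧
      ∀ x ∈ children root parent v,
        ω x + maxMatchAvoid parent ω x - maxMatch parent ω x ≤
          ω u + maxMatchAvoid parent ω u - maxMatch parent ω u) :
    ∃ M : Finset V, IsSubtreeMatching parent root M ∧
      (∀ u ∈ M, p (parent u) = some u) ∧
      (∑ u ∈ M, ω u) = maxMatch parent ω root := by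
  obtain ⟨A, h1, h2, h3⟩ := (key hT hdef hsel root).1
  exact ⟨A, h1, h2, (maxMatch_eq h1 h3).symm⟩
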